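/- Fix a common factor dimension a and two constrained polynomial zonotope parameterizations in ℝ^n: p₁(α) = c₁ + Σ_{i=1}^{h₁} (Π_{k=1}^{a} α_k^{Ē₁(k,i)}) G₁(·,i) with constraints Σ_{i=1}^{q₁} (Π_k α_k^{R̄₁(k,i)}) A₁(·,i) = b₁, and p₂(α) = c₂ + Σ_{i=1}^{h₂} (Π_{k=1}^{a} α_k^{Ē₂(k,i)}) G₂(·,i) with constraints Σ_{i=1}^{q₂} (Π_k α_k^{R̄₂(k,i)}) A₂(·,i) = b₂. Then the dependency-preserving sum set { p₁(α) + p₂(α) : α ∈ [-1,1]^a satisfying both constraint equations } equals CPZ(c₁+c₂, [G₁ G₂], [Ē₁ Ē₂], blkdiag(A₁,A₂), [b₁; b₂], [R̄₁ R̄₂]), where [G₁ G₂] and [Ē₁ Ē₂] and [R̄₁ R̄₂] denote horizontal concatenation and blkdiag(A₁,A₂) is the block-diagonal matrix [[A₁, 0],[0, A₂]]. Hence the exact addition of two CPZs admits an algebraically exact CPZ representation. -/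
import Mathlib


open scoped BigOperators

/-- A constrained polynomial zonotope. -/
def CPZ {N P H M Q : Type*} [Fintype P] [Fintype H] [Fintype Q]
    (c : N → ℝ) (G : N → H → ℝ) (E : P → H → ℕ)
    (A : M → Q → ℝ) (b : M → ℝ) (R : P → Q → ℕ) : Set (N → ℝ) :=
  { x | ∃ α : P → ℝ, (∀ k, α k ∈ Set.Icc (-1 : ℝ) 1) ∧
      (∀ r, ∑ j, (∏ k, α k ^ R k j) * A r j = b r) ∧
      x = fun ℓ => c ℓ + ∑ i, (∏ k, α k ^ E k i) * G ℓ i }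

/-- Exact addition of two CPZ parameterizations over a common factor dimension:
the dependency-preserving sum set admits an algebraically exact CPZ representation. -/
theorem stmt6 {n a h₁ h₂ m₁ m₂ q₁ q₂ : ℕ}
    (c₁ : Fin n → ℝ) (G₁ : Fin n → Fin h₁ → ℝ) (E₁ : Fin a → Fin h₁ → ℕ)
    (A₁ : Fin m₁ → Fin q₁ → ℝ) (b₁ : Fin m₁ → ℝ) (R₁ : Fin a → Fin q₁ → ℕ)
    (c₂ : Fin n → ℝ) (G₂ : Fin n → Fin h₂ → ℝ) (E₂ : Fin a → Fin h₂ → ℕ)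
    (A₂ : Fin m₂ → Fin q₂ → ℝ) (b₂ : Fin m₂ → ℝ) (R₂ : Fin a → Fin q₂ → ℕ) :
    { x : Fin n → ℝ | ∃ α : Fin a → ℝ,
        (∀ k, α k ∈ Set.Icc (-1 : ℝ) 1) ∧
        (∀ r, ∑ i, (∏ k, α k ^ R₁ k i) * A₁ r i = b₁ r) ∧
        (∀ r, ∑ i, (∏ k, α k ^ R₂ k i) * A₂ r i = b₂ r) ∧
        x = fun ℓ => (c₁ ℓ + ∑ i, (∏ k, α k ^ E₁ k i) * G₁ ℓ i)
                   + (c₂ ℓ + ∑ i, (∏ k, α k ^ E₂ k i) * G₂ ℓ i) }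
    = CPZ (P := Fin a) (H := Fin h₁ ⊕ Fin h₂) (M := Fin m₁ ⊕ Fin m₂)
        (Q := Fin q₁ ⊕ Fin q₂)
        (fun ℓ => c₁ ℓ + c₂ ℓ)
        (fun ℓ => Sum.elim (G₁ ℓ) (G₂ ℓ))
        (fun k => Sum.elim (E₁ k) (E₂ k))
        (fun r j => match r, j with
          | Sum.inl r, Sum.inl j => A₁ r j
          | Sum.inr r, Sum.inr j => A₂ r j
          | _, _ => 0)
        (Sum.elim b₁ b₂)
        (fun k => Sum.elim (R₁ k) (R₂ k)) := by
  ext x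
  simp only [CPZ, Set.mem_setOf_eq]
  constructor
  · rintro ⟨α, hα, hc1, hc2, hx⟩
    refine ⟨α, hα, ?_, ?_⟩
    · rintro (r | r)
      · simp [Fintype.sum_sum_type, hc1 r]
      · simp [Fintype.sum_sum_type, hc2 r]
    · funext ℓ
      rw [hx]
      simp [Fintype.sum_sum_type]
      ring
  · rintro ⟨α, hα, hc, hx⟩
    refine ⟨α, hα, ?_, ?_, ?_⟩
    · intro r
      have := hc (Sum.inl r)
      simpa [Fintype.sum_sum_type] using this
    · intro r
      have := hc (Sum.inr r)
      simpa [Fintype.sum_sum_type] using this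
    · funext ℓ
      rw [hx]
      simp [Fintype.sum_sum_type]
      ring
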